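/- arXiv:1106.2068 — 4 statements merged into one kernel-verified Lean document; each statement's English description precedes it below -/
import Mathlib

section
/- (Lemma 3) Assume (A1) and (B3), and let α ∈ (0,1). Then B · c(α) ≤ Σ_{b=1}^B π_b(c(α)) ≤ log(1/(1−α)). -/
open scoped ENNReal

noncomputable section

/-- A multiple-testing framework with `m` hypotheses: data space `Ω` with distribution `Q`,
`p`-values `p j` taking values in the finite set `S ⊆ [0,1]`, set of true nulls `I`,
a finite group `G` of measurable bijections of the data space, and a partition
`A 1, …, A B` of the hypotheses into blocks, each containing a true null. -/
structure Framework (m : ℕ) where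
  Ω : Type
  [meas : MeasurableSpace Ω]
  Q : MeasureTheory.Measure Ω
  Qprob : MeasureTheory.IsProbabilityMeasure Q
  S : Finset ℝ
  hS : ∀ s ∈ S, 0 ≤ s ∧ s ≤ 1
  p : Fin m → Ω → ℝ
  p_meas : ∀ j, Measurable (p j)
  p_mem : ∀ j w, p j w ∈ S
  I : Finset (Fin m)
  G : Finset (Ω ≃ᵐ Ω)
  G_one : MeasurableEquiv.refl Ω ∈ G
  G_mul : ∀ g ∈ G, ∀ g' ∈ G, g.trans g' ∈ G
  G_inv : ∀ g ∈ G, g.symm ∈ G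
  B : ℕ
  B_pos : 0 < B
  A : Fin B → Finset (Fin m)
  A_disj : ∀ b b', b ≠ b' → Disjoint (A b) (A b')
  A_cover : ∀ j, ∃ b, j ∈ A b
  A_I : ∀ b, (A b ∩ I).Nonempty

attribute [instance] Framework.meas Framework.Qprob

open MeasureTheory ProbabilityTheory Filter

namespace Framework

variable {m : ℕ} (F : Framework m)

/-- Minimum of the `p`-values over the index set `J` (`1` by convention if `J = ∅`). -/
def fmin (J : Finset (Fin m)) (w : F.Ω) : ℝ :=
  if h : J.Nonempty then J.inf' h (fun j => F.p j w) else 1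

/-- `min_{j ∈ I} p_j(w)`, the minimal `p`-value over the true null hypotheses. -/
def nullMin : F.Ω → ℝ := F.fmin F.I

/-- `min_{1 ≤ j ≤ m} p_j(w)`, the minimal `p`-value over all hypotheses. -/
def fullMin : F.Ω → ℝ := F.fmin Finset.univ

/-- `p^(b)(w) = min_{j ∈ A_b ∩ I} p_j(w)`, the minimal null `p`-value in block `b`. -/
def blockMin (b : Fin F.B) : F.Ω → ℝ := F.fmin (F.A b ∩ F.I)

/-- The permutation probability `P*(E)(w) = |G|⁻¹ ∑_{g ∈ G} 1{g w ∈ E}`. -/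
def Pstar (E : Set F.Ω) (w : F.Ω) : ℝ :=
  (F.G.card : ℝ)⁻¹ * ∑ g ∈ F.G, E.indicator (fun _ => (1 : ℝ)) (g w)

/-- The oracle threshold `c(α) = max {s ∈ S : Q(min_{j ∈ I} p_j(W) ≤ s) ≤ α}`,
with `max ∅ := 0`. -/
def oracle (α : ℝ) : ℝ :=
  WithBot.unbotD 0 ((F.S.filter (fun s => (F.Q {w | F.nullMin w ≤ s}).toReal ≤ α)).max)

/-- The single-step Westfall--Young threshold
`ĉ(α)(w) = max {s ∈ S : P*(min_{1≤j≤m} p_j(W) ≤ s)(w) ≤ α}`, with `max ∅ := 0`. -/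
def wy (α : ℝ) (w : F.Ω) : ℝ :=
  WithBot.unbotD 0 ((F.S.filter (fun s => F.Pstar {w' | F.fullMin w' ≤ s} w ≤ α)).max)

/-- The maximal block size `m_B = max_b |A_b|`. -/
def mB : ℕ := Finset.univ.sup (fun b : Fin F.B => (F.A b).card)

/-- `π_b(c) = Q(p^(b)(W) ≤ c)`. -/
def piB (b : Fin F.B) (c : ℝ) : ℝ := (F.Q {w | F.blockMin b w ≤ c}).toReal

/-- Assumption (A1): for every pair `g, g' ∈ G`, the random variables
`min (p^(b)(gW)) (p^(b)(g'W))`, `b = 1, …, B`, are mutually independent under `Q`. -/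
def A1 : Prop :=
  ∀ g ∈ F.G, ∀ g' ∈ F.G,
    iIndepFun (β := fun _ : Fin F.B => ℝ)
      (fun b : Fin F.B => fun w => min (F.blockMin b (g w)) (F.blockMin b (g' w))) F.Q

/-- Assumption (B1): for `G` uniformly distributed on the permutation group and independent
of `W`, the joint distribution of `(p_j(GW))_{j ∈ I}` equals that of `(p_j(W))_{j ∈ I}`;
expressed as an equality between the uniform mixture of the pushforwards and the
pushforward of `Q` itself. -/
def B1 : Prop :=
  (F.G.card : ℝ≥0∞)⁻¹ •
      (∑ g ∈ F.G, Measure.map (fun w => fun j : F.I => F.p j (g w)) F.Q)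
    = Measure.map (fun w => fun j : F.I => F.p j w) F.Q

/-- Assumption (B2) with constant `r`:
`r⁻¹ s ≤ P*(p_j(W) ≤ s)(w) ≤ r s` for all `j`, all `s ∈ S` and all `w`. -/
def B2 (r : ℝ) : Prop :=
  ∀ j : Fin m, ∀ s ∈ F.S, ∀ w : F.Ω,
    r⁻¹ * s ≤ F.Pstar {w' | F.p j w' ≤ s} w ∧ F.Pstar {w' | F.p j w' ≤ s} w ≤ r * s

/-- Assumption (B3): null `p`-values are uniformly distributed on `S`:
`Q(p_j(W) ≤ s) = s` for all `j ∈ I`, `s ∈ S`. -/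
def B3 : Prop :=
  ∀ j ∈ F.I, ∀ s ∈ F.S, (F.Q {w | F.p j w ≤ s}).toReal = s

end Framework

/-!
The lower bound holds because every block contains a true null whose `p`-value is uniform on
`S`, so `π_b(c) ≥ Q(p_j(W) ≤ c) = c` for `c ∈ S`. For the upper bound, the block minima are
independent by (A1) with `g = g' = id`, and `min_{j ∈ I} p_j > c` iff every block minimum
exceeds `c`; hence `1 - α ≤ Q(min_{j ∈ I} p_j(W) > c) = ∏_b (1 - π_b(c)) ≤ exp (-∑_b π_b(c))`.
-/

open Real

theorem Finset.max_unbotD_eq_or_mem {α : Type*} [LinearOrder α] (s : Finset α) (d : α) :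
    s.max.unbotD d = d ∨ s.max.unbotD d ∈ s := by
  cases h : s.max with
  | bot => exact Or.inl rfl
  | coe a => exact Or.inr (Finset.mem_of_max h)

theorem Real.prod_one_sub_le_exp_neg_sum {ι : Type*} (s : Finset ι) {x : ι → ℝ}
    (hx : ∀ i ∈ s, x i ≤ 1) : ∏ i ∈ s, (1 - x i) ≤ exp (-∑ i ∈ s, x i) := by
  rw [← Finset.sum_neg_distrib, exp_sum]
  refine Finset.prod_le_prod (fun i hi => by linarith [hx i hi]) fun i _ => ?_
  linarith [add_one_le_exp (-x i)]

theorem ProbabilityTheory.iIndepFun.one_sub_measureReal_iUnion_le_exp {Ω ι : Type*}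
    [MeasurableSpace Ω] {μ : Measure Ω} [IsProbabilityMeasure μ] [Fintype ι]
    {X : ι → Ω → ℝ} (hX : iIndepFun X μ) (hXm : ∀ i, Measurable (X i)) (c : ℝ) :
    1 - μ.real (⋃ i, {w | X i w ≤ c}) ≤ exp (-∑ i, μ.real {w | X i w ≤ c}) := by
  have hmeas : ∀ i, MeasurableSet {w | X i w ≤ c} := fun i => hXm i measurableSet_Iic
  have hcompl : ∀ i, X i ⁻¹' Set.Ioi c = {w | X i w ≤ c}ᶜ := fun i => by ext; simp
  calc 1 - μ.real (⋃ i, {w | X i w ≤ c})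
      = μ.real (⋂ i ∈ Finset.univ, X i ⁻¹' Set.Ioi c) := by
        rw [← probReal_compl_eq_one_sub (MeasurableSet.iUnion hmeas), Set.compl_iUnion]
        simp only [Finset.mem_univ, Set.iInter_true, hcompl]
    _ = ∏ i, (1 - μ.real {w | X i w ≤ c}) := by
        rw [measureReal_def, hX.measure_inter_preimage_eq_mul _ fun _ _ => measurableSet_Ioi,
          ENNReal.toReal_prod]
        refine Finset.prod_congr rfl fun i _ => ?_
        rw [hcompl, ← measureReal_def, probReal_compl_eq_one_sub (hmeas i)]
    _ ≤ exp (-∑ i, μ.real {w | X i w ≤ c}) :=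
        prod_one_sub_le_exp_neg_sum _ fun _ _ => measureReal_le_one

namespace Framework

variable {m : ℕ} (F : Framework m)

theorem setOf_fmin_le {J : Finset (Fin m)} (hJ : J.Nonempty) (c : ℝ) :
    {w | F.fmin J w ≤ c} = ⋃ j ∈ J, {w | F.p j w ≤ c} := by
  ext w
  simp [fmin, hJ, Finset.inf'_le_iff]

theorem measurableSet_fmin_le {J : Finset (Fin m)} (hJ : J.Nonempty) (c : ℝ) :
    MeasurableSet {w | F.fmin J w ≤ c} := by
  rw [F.setOf_fmin_le hJ]
  exact Finset.measurableSet_biUnion _ fun j _ => F.p_meas j measurableSet_Iic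

theorem I_nonempty : F.I.Nonempty :=
  (F.A_I ⟨0, F.B_pos⟩).mono Finset.inter_subset_right

theorem measurable_blockMin (b : Fin F.B) : Measurable (F.blockMin b) :=
  measurable_of_Iic (F.measurableSet_fmin_le (F.A_I b))

theorem setOf_nullMin_le (c : ℝ) :
    {w | F.nullMin w ≤ c} = ⋃ b, {w | F.blockMin b w ≤ c} := by
  simp only [nullMin, blockMin, F.setOf_fmin_le F.I_nonempty, F.setOf_fmin_le (F.A_I _)]
  ext w
  simp only [Set.mem_iUnion, Finset.mem_inter, exists_prop]
  constructor
  · rintro ⟨j, hjI, hj⟩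
    obtain ⟨b, hjb⟩ := F.A_cover j
    exact ⟨b, j, ⟨hjb, hjI⟩, hj⟩
  · rintro ⟨b, j, ⟨_, hjI⟩, hj⟩
    exact ⟨j, hjI, hj⟩

theorem iIndepFun_blockMin (hA1 : F.A1) : iIndepFun F.blockMin F.Q := by
  simpa using hA1 _ F.G_one _ F.G_one

theorem one_sub_measureReal_nullMin_le_exp (hA1 : F.A1) (c : ℝ) :
    1 - F.Q.real {w | F.nullMin w ≤ c} ≤ exp (-∑ b, F.piB b c) := by
  rw [F.setOf_nullMin_le]
  exact (F.iIndepFun_blockMin hA1).one_sub_measureReal_iUnion_le_exp F.measurable_blockMin c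

theorem le_piB (hB3 : F.B3) (b : Fin F.B) {s : ℝ} (hs : s ∈ F.S) : s ≤ F.piB b s := by
  obtain ⟨j, hj⟩ := F.A_I b
  calc s = F.Q.real {w | F.p j w ≤ s} := (hB3 j (Finset.mem_inter.mp hj).2 s hs).symm
    _ ≤ F.piB b s := by
        refine measureReal_mono ?_
        rw [blockMin, F.setOf_fmin_le (F.A_I b)]
        exact Set.subset_biUnion_of_mem (u := fun j => {w | F.p j w ≤ s}) hj

theorem measure_p_nonpos_eq_zero (hB3 : F.B3) {j : Fin m} (hj : j ∈ F.I) :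
    F.Q {w | F.p j w ≤ 0} = 0 := by
  by_cases h0 : (0 : ℝ) ∈ F.S
  · exact (measureReal_eq_zero_iff).mp (hB3 j hj 0 h0)
  · -- `p`-values lie in `S ⊆ [0, 1]`, so `p_j ≤ 0` would force `0 ∈ S`.
    convert measure_empty (μ := F.Q)
    refine Set.eq_empty_of_forall_notMem fun w hw => h0 ?_
    have := F.p_mem j w
    rwa [le_antisymm hw (F.hS _ this).1] at this

theorem measure_nullMin_nonpos_eq_zero (hB3 : F.B3) : F.Q {w | F.nullMin w ≤ 0} = 0 := by
  rw [nullMin, F.setOf_fmin_le F.I_nonempty, ← Finset.set_biUnion_coe,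
    measure_biUnion_null_iff F.I.countable_toSet]
  exact fun j hj => F.measure_p_nonpos_eq_zero hB3 hj

theorem oracle_eq_zero_or_mem (α : ℝ) :
    F.oracle α = 0 ∨ F.oracle α ∈ F.S ∧ F.Q.real {w | F.nullMin w ≤ F.oracle α} ≤ α := by
  have h := Finset.max_unbotD_eq_or_mem
    (F.S.filter fun s => (F.Q {w | F.nullMin w ≤ s}).toReal ≤ α) 0
  rwa [Finset.mem_filter] at h

theorem oracle_le_piB (hB3 : F.B3) (α : ℝ) (b : Fin F.B) :
    F.oracle α ≤ F.piB b (F.oracle α) := by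
  rcases F.oracle_eq_zero_or_mem α with h | ⟨hS, _⟩
  · rw [h]
    exact measureReal_nonneg
  · exact F.le_piB hB3 b hS

theorem measureReal_nullMin_le_oracle (hB3 : F.B3) {α : ℝ} (hα : 0 ≤ α) :
    F.Q.real {w | F.nullMin w ≤ F.oracle α} ≤ α := by
  rcases F.oracle_eq_zero_or_mem α with h | ⟨_, hle⟩
  · rwa [h, measureReal_def, F.measure_nullMin_nonpos_eq_zero hB3, ENNReal.toReal_zero]
  · exact hle

end Framework

/-- **Lemma 3.** Under (A1) and (B3), for `α ∈ (0,1)`: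
`B·c(α) ≤ ∑_{b=1}^B π_b(c(α)) ≤ log(1/(1−α))`. -/
theorem lemma3_sum_block_probabilities
    {m : ℕ} (F : Framework m) (hA1 : F.A1) (hB3 : F.B3)
    (α : ℝ) (hα : α ∈ Set.Ioo (0 : ℝ) 1) :
    (F.B : ℝ) * F.oracle α ≤ ∑ b : Fin F.B, F.piB b (F.oracle α) ∧
    ∑ b : Fin F.B, F.piB b (F.oracle α) ≤ Real.log (1 / (1 - α)) := by
  obtain ⟨hα0, hα1⟩ := hα
  constructor
  · simpa using Finset.sum_le_sum fun b (_ : b ∈ Finset.univ) => F.oracle_le_piB hB3 α b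
  · have h : 1 - α ≤ exp (-∑ b, F.piB b (F.oracle α)) :=
      (F.one_sub_measureReal_nullMin_le_exp hA1 _).trans' <| by
        linarith [F.measureReal_nullMin_le_oracle hB3 hα0.le]
    rw [one_div, log_inv, le_neg, ← log_exp (-_)]
    exact log_le_log (by linarith) h
end
end

section
/- (Constrained maximization of the sum of block probabilities) Let α ∈ (0,1) and let π₁, …, π_B be real numbers in [0,1] satisfying 1 − ∏_{b=1}^B (1 − π_b) ≤ α. Then Σ_{b=1}^B π_b ≤ B (1 − (1−α)^{1/B}), and consequently Σ_{b=1}^B π_b ≤ log(1/(1−α)). -/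
/-! With `z_b = 1 - π_b`, the constraint says `∏ z_b ≥ 1 - α`, so by AM-GM
`∑ z_b ≥ B (∏ z_b)^{1/B} ≥ B (1-α)^{1/B}`, which is the first bound. The second follows from
`log y ≤ y - 1` applied to `y = (1-α)^{1/B}`. -/

open Finset

theorem card_mul_prod_rpow_inv_card_le_sum {ι : Type*} [Fintype ι] {z : ι → ℝ}
    (hz : ∀ i, 0 ≤ z i) :
    (Fintype.card ι : ℝ) * (∏ i, z i) ^ (Fintype.card ι : ℝ)⁻¹ ≤ ∑ i, z i := by
  cases isEmpty_or_nonempty ι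
  · simp
  have hcard : (0 : ℝ) < Fintype.card ι := by exact_mod_cast Fintype.card_pos
  have amgm := Real.geom_mean_le_arith_mean univ (fun _ ↦ 1) z (fun _ _ ↦ zero_le_one)
    (by simpa using hcard) (fun i _ ↦ hz i)
  simp only [Real.rpow_one, sum_const, card_univ, nsmul_eq_mul, mul_one, one_mul] at amgm
  rwa [le_div_iff₀ hcard, mul_comm] at amgm

theorem mul_one_sub_rpow_inv_le_neg_log {x t : ℝ} (hx₀ : 0 < x) (hx₁ : x ≤ 1) (ht : 0 ≤ t) :
    t * (1 - x ^ t⁻¹) ≤ -Real.log x := by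
  rcases ht.eq_or_lt with rfl | ht
  · simpa using Real.log_nonpos hx₀.le hx₁
  have hlog := Real.log_le_sub_one_of_pos (Real.rpow_pos_of_pos hx₀ t⁻¹)
  rw [Real.log_rpow hx₀, inv_mul_le_iff₀ ht] at hlog
  linarith

theorem constrained_max_sum_block_probs_general
    {B : ℕ} (α : ℝ) (hα : α ∈ Set.Ioo (0 : ℝ) 1)
    (π : Fin B → ℝ) (hπ : ∀ b, π b ∈ Set.Icc (0 : ℝ) 1)
    (hcon : 1 - ∏ b, (1 - π b) ≤ α) :
    ∑ b, π b ≤ (B : ℝ) * (1 - (1 - α) ^ ((B : ℝ)⁻¹)) ∧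
    ∑ b, π b ≤ Real.log (1 / (1 - α)) := by
  have hα₁ : 0 < 1 - α := by linarith [hα.2]
  have hz : ∀ b, 0 ≤ 1 - π b := fun b ↦ by linarith [(hπ b).2]
  have hroot : (1 - α) ^ (B : ℝ)⁻¹ ≤ (∏ b, (1 - π b)) ^ (B : ℝ)⁻¹ :=
    Real.rpow_le_rpow hα₁.le (by linarith) (by positivity)
  have amgm : (B : ℝ) * (1 - α) ^ (B : ℝ)⁻¹ ≤ ∑ b, (1 - π b) := by
    have h := card_mul_prod_rpow_inv_card_le_sum hz
    rw [Fintype.card_fin] at h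
    exact (mul_le_mul_of_nonneg_left hroot B.cast_nonneg).trans h
  have first : ∑ b, π b ≤ (B : ℝ) * (1 - (1 - α) ^ (B : ℝ)⁻¹) := by
    rw [sum_sub_distrib] at amgm
    simp only [sum_const, card_univ, Fintype.card_fin, nsmul_eq_mul, mul_one] at amgm
    linarith
  refine ⟨first, first.trans ?_⟩
  rw [one_div, Real.log_inv]
  exact mul_one_sub_rpow_inv_le_neg_log hα₁ (by linarith [hα.1]) B.cast_nonneg

/-- **Constrained maximization of the sum of block probabilities.** If
`π₁,…,π_B ∈ [0,1]` satisfy `1 − ∏ (1 − π_b) ≤ α` with `α ∈ (0,1)`, then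
`∑ π_b ≤ B(1 − (1−α)^{1/B})`, and consequently `∑ π_b ≤ log(1/(1−α))`. -/
theorem constrained_max_sum_block_probs
    {B : ℕ} (hB : 0 < B) (α : ℝ) (hα : α ∈ Set.Ioo (0 : ℝ) 1)
    (π : Fin B → ℝ) (hπ : ∀ b, π b ∈ Set.Icc (0 : ℝ) 1)
    (hcon : 1 - ∏ b, (1 - π b) ≤ α) :
    ∑ b, π b ≤ (B : ℝ) * (1 - (1 - α) ^ ((B : ℝ)⁻¹)) ∧
    ∑ b, π b ≤ Real.log (1 / (1 - α)) :=
  constrained_max_sum_block_probs_general α hα π hπ hcon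
end

section
/- (Theorem 2, first part: nontriviality of the Wilcoxon oracle threshold) Assume (B3), let n ≥ 2 be an even integer, and suppose the finite p-value range S satisfies min S = 2 · ((n/2)!)² / n! (the smallest attainable p-value of the two-sided two-sample Wilcoxon test with equal group sizes n/2). Then, for α ∈ (0,1), if n ≥ 2 log₂(m/α) + 2, the oracle threshold satisfies c(α) ≥ min S > 0; i.e., c(α) is strictly positive. -/
/-!
Bonferroni: the minimum of the true-null `p`-values is at most `s` with probability at most
`|I| · s ≤ m · s`, so it suffices that `m · min S ≤ α`. Since `min S = 2 / C(n, n/2)` and the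
central binomial coefficient `C(2k, k)` is at least `2^k`, this follows from `m / α ≤ 2^(n/2 - 1)`,
which is the hypothesis on `n`.
-/

noncomputable section

/-- The oracle threshold `c(α) = max {s ∈ S : Q(f(W) ≤ s) ≤ α}`, with `max ∅ := 0`. -/
def oracleOf {Ω : Type*} [MeasurableSpace Ω] (Q : MeasureTheory.Measure Ω)
    (S : Finset ℝ) (f : Ω → ℝ) (α : ℝ) : ℝ :=
  WithBot.unbotD 0 ((S.filter (fun s => (Q {w | f w ≤ s}).toReal ≤ α)).max)

open MeasureTheory

theorem Nat.two_pow_le_centralBinom (k : ℕ) : 2 ^ k ≤ k.centralBinom := by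
  induction k with
  | zero => simp
  | succ k ih =>
    have hstep : (k + 1) * (2 * 2 ^ k) ≤ (k + 1) * (k + 1).centralBinom :=
      calc (k + 1) * (2 * 2 ^ k) ≤ (k + 1) * (2 * k.centralBinom) := by gcongr
        _ ≤ 2 * (2 * k + 1) * k.centralBinom := by nlinarith
        _ = (k + 1) * (k + 1).centralBinom := (Nat.succ_mul_centralBinom_succ k).symm
    rw [pow_succ']
    exact Nat.le_of_mul_le_mul_left hstep k.succ_pos

theorem Nat.centralBinom_mul_factorial_mul_factorial (k : ℕ) :
    k.centralBinom * k.factorial * k.factorial = (k + k).factorial := by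
  rw [Nat.centralBinom_eq_two_mul_choose, two_mul, Nat.add_choose_mul_factorial_mul_factorial]

theorem two_mul_factorial_sq_div_factorial_le (k : ℕ) :
    2 * (k.factorial : ℝ) ^ 2 / ((k + k).factorial : ℝ) ≤ 2 / 2 ^ k := by
  have hcb : (k.centralBinom : ℝ) ≠ 0 := by exact_mod_cast k.centralBinom_ne_zero
  calc 2 * (k.factorial : ℝ) ^ 2 / ((k + k).factorial : ℝ) = 2 / k.centralBinom := by
        rw [← Nat.centralBinom_mul_factorial_mul_factorial]
        push_cast
        field_simp
    _ ≤ 2 / 2 ^ k := by gcongr; exact_mod_cast k.two_pow_le_centralBinom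

theorem two_mul_le_of_two_mul_logb_add_two_le {x α : ℝ} {k : ℕ} (hx : 0 < x) (hα : 0 < α)
    (h : 2 * Real.logb 2 (x / α) + 2 ≤ ((k + k : ℕ) : ℝ)) : 2 * x ≤ α * 2 ^ k := by
  have hlog : Real.logb 2 (x / α) ≤ (k : ℝ) - 1 := by push_cast at h; linarith
  rw [Real.logb_le_iff_le_rpow one_lt_two (by positivity), Real.rpow_sub two_pos,
    Real.rpow_one, Real.rpow_natCast, div_le_iff₀ hα] at hlog
  linarith

theorem measureReal_inf'_le_le_sum {Ω ι : Type*} [MeasurableSpace Ω] (Q : Measure Ω)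
    [IsFiniteMeasure Q] {I : Finset ι} (hI : I.Nonempty) (f : ι → Ω → ℝ) (s : ℝ) :
    Q.real {w | I.inf' hI (f · w) ≤ s} ≤ ∑ j ∈ I, Q.real {w | f j w ≤ s} := by
  have hunion : {w | I.inf' hI (f · w) ≤ s} = ⋃ j ∈ I, {w | f j w ≤ s} := by
    ext w
    simp [Finset.inf'_le_iff]
  rw [hunion]
  exact measureReal_biUnion_finset_le I _

theorem le_oracleOf {Ω : Type*} [MeasurableSpace Ω] {Q : Measure Ω} {S : Finset ℝ}
    {f : Ω → ℝ} {α s : ℝ} (hs : s ∈ S) (hQ : (Q {w | f w ≤ s}).toReal ≤ α) :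
    s ≤ oracleOf Q S f α :=
  WithBot.le_unbotD (Finset.le_max (Finset.mem_filter.2 ⟨hs, hQ⟩))

theorem wilcoxon_oracle_threshold_positive_general
    {Ω : Type*} [MeasurableSpace Ω] (Q : Measure Ω) [IsProbabilityMeasure Q]
    {m : ℕ} (p : Fin m → Ω → ℝ) (S : Finset ℝ) (hSne : S.Nonempty)
    (I : Finset (Fin m)) (hI : I.Nonempty)
    (hB3 : ∀ j ∈ I, ∀ s ∈ S, (Q {w | p j w ≤ s}).toReal = s)
    (n : ℕ) (hneven : Even n)
    (hmin : S.min' hSne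
      = 2 * ((n / 2).factorial : ℝ) ^ 2 / (n.factorial : ℝ))
    (α : ℝ) (hα : α ∈ Set.Ioo (0 : ℝ) 1)
    (hcond : 2 * Real.logb 2 ((m : ℝ) / α) + 2 ≤ (n : ℝ)) :
    S.min' hSne ≤ oracleOf Q S (fun w => I.inf' hI (fun j => p j w)) α ∧
    0 < oracleOf Q S (fun w => I.inf' hI (fun j => p j w)) α := by
  obtain ⟨k, rfl⟩ := hneven
  set s₀ := S.min' hSne
  have hs₀_pos : 0 < s₀ := by rw [hmin]; positivity
  have hs₀_le : s₀ ≤ 2 / 2 ^ k := by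
    rw [hmin, show (k + k) / 2 = k by omega]
    exact two_mul_factorial_sq_div_factorial_le k
  have hm : (0 : ℝ) < m := by exact_mod_cast hI.choose.pos
  have hfwer : Q.real {w | I.inf' hI (p · w) ≤ s₀} ≤ α :=
    calc Q.real {w | I.inf' hI (p · w) ≤ s₀} ≤ ∑ j ∈ I, Q.real {w | p j w ≤ s₀} :=
          measureReal_inf'_le_le_sum Q hI p s₀
      _ = I.card * s₀ :=
          (Finset.sum_congr rfl fun j hj => hB3 j hj s₀ (S.min'_mem hSne)).trans (by simp)
      _ ≤ m * (2 / 2 ^ k) := by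
          gcongr
          exact_mod_cast I.card_le_univ.trans_eq (Fintype.card_fin m)
      _ ≤ α := by
          rw [mul_div_assoc', div_le_iff₀ (by positivity)]
          linarith [two_mul_le_of_two_mul_logb_add_two_le hm hα.1 hcond]
  have hle := le_oracleOf (S.min'_mem hSne) hfwer
  exact ⟨hle, hs₀_pos.trans_le hle⟩

/-- **Theorem 2, first part (nontriviality of the Wilcoxon oracle threshold).**
Under (B3), if the smallest attainable `p`-value is `min S = 2((n/2)!)²/n!` (two-sided
two-sample Wilcoxon with equal group sizes `n/2`, `n` even) and `n ≥ 2·log₂(m/α) + 2`,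
then the oracle threshold satisfies `c(α) ≥ min S > 0`. -/
theorem wilcoxon_oracle_threshold_positive
    {Ω : Type*} [MeasurableSpace Ω] (Q : Measure Ω) [IsProbabilityMeasure Q]
    {m : ℕ} (p : Fin m → Ω → ℝ) (S : Finset ℝ) (hSne : S.Nonempty)
    (hS01 : ∀ s ∈ S, 0 ≤ s ∧ s ≤ 1) (hp : ∀ j w, p j w ∈ S)
    (I : Finset (Fin m)) (hI : I.Nonempty)
    (hB3 : ∀ j ∈ I, ∀ s ∈ S, (Q {w | p j w ≤ s}).toReal = s)
    (n : ℕ) (hn2 : 2 ≤ n) (hneven : Even n)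
    (hmin : S.min' hSne
      = 2 * ((n / 2).factorial : ℝ) ^ 2 / (n.factorial : ℝ))
    (α : ℝ) (hα : α ∈ Set.Ioo (0 : ℝ) 1)
    (hcond : 2 * Real.logb 2 ((m : ℝ) / α) + 2 ≤ (n : ℝ)) :
    S.min' hSne ≤ oracleOf Q S (fun w => I.inf' hI (fun j => p j w)) α ∧
    0 < oracleOf Q S (fun w => I.inf' hI (fun j => p j w)) α :=
  wilcoxon_oracle_threshold_positive_general Q p S hSne I hI hB3 n hneven hmin α hα hcond
end
end

section
/- (Weak FWER control of the single-step Westfall–Young procedure) Suppose the p-value functions take values in a finite set S ⊆ (0,1], and suppose the randomization hypothesis holds: for every g ∈ 𝒢, the random element gW has the same distribution under Q as W. Define the Westfall–Young threshold ĉ(α)(w) = max{ s ∈ S : P*( min_{1≤j≤m} p_j(W) ≤ s )(w) ≤ α }, with max ∅ := 0. Then for every α ∈ (0,1), Q( min_{1≤j≤m} p_j(W) ≤ ĉ(α)(W) ) ≤ α. -/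
/-!
For `g ∈ G` the threshold is invariant, `ĉ(α)(g w) = ĉ(α)(w)`, since `h ↦ g.trans h` permutes
`G`. Hence the permutation probability of the rejection event `A = {min_j p_j ≤ ĉ(α)}` at `w`
is that of `{min_j p_j ≤ ĉ(α)(w)}`, which is at most `α` by the choice of `ĉ(α)(w)`. By the
randomization hypothesis every `g⁻¹ A` has probability `Q A`, so `Q A = E_Q[P*(A)] ≤ α`.
-/

noncomputable section

/-- The permutation probability `P*(E)(w) = |G|⁻¹ ∑_{g ∈ G} 1{g w ∈ E}`. -/
def PstarOf {Ω : Type*} [MeasurableSpace Ω] (G : Finset (Ω ≃ᵐ Ω)) (E : Set Ω)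
    (w : Ω) : ℝ :=
  (G.card : ℝ)⁻¹ * ∑ g ∈ G, E.indicator (fun _ => (1 : ℝ)) (g w)

/-- The single-step Westfall–Young threshold
`ĉ(α)(w) = max {s ∈ S : P*(min_{1≤j≤m} p_j(W) ≤ s)(w) ≤ α}`, with `max ∅ := 0`. -/
def wyOf {Ω : Type*} [MeasurableSpace Ω] (G : Finset (Ω ≃ᵐ Ω)) (S : Finset ℝ)
    (f : Ω → ℝ) (α : ℝ) (w : Ω) : ℝ :=
  WithBot.unbotD 0 ((S.filter (fun s => PstarOf G {w' | f w' ≤ s} w ≤ α)).max)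

open MeasureTheory

section PermutationProbability

variable {Ω : Type*} [MeasurableSpace Ω] (G : Finset (Ω ≃ᵐ Ω))

lemma PstarOf_eq_sum_indicator_preimage (E : Set Ω) (w : Ω) :
    PstarOf G E w = (G.card : ℝ)⁻¹ * ∑ g ∈ G, (g ⁻¹' E).indicator 1 w :=
  rfl

lemma measurable_PstarOf {E : Set Ω} (hE : MeasurableSet E) : Measurable (PstarOf G E) := by
  simp only [funext (PstarOf_eq_sum_indicator_preimage G E)]
  exact measurable_const.mul <| Finset.measurable_sum _ fun g _ =>
    measurable_one.indicator (hE.preimage g.measurable)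

lemma PstarOf_nonneg (E : Set Ω) (w : Ω) : 0 ≤ PstarOf G E w := by
  unfold PstarOf
  exact mul_nonneg (by positivity) <|
    Finset.sum_nonneg fun g _ => Set.indicator_nonneg (fun _ _ => zero_le_one) _

lemma PstarOf_mono {E F : Set Ω} (h : E ⊆ F) (w : Ω) : PstarOf G E w ≤ PstarOf G F w := by
  unfold PstarOf
  gcongr

@[simp]
lemma PstarOf_empty (w : Ω) : PstarOf G ∅ w = 0 := by
  simp [PstarOf]

lemma PstarOf_congr {E F : Set Ω} {w : Ω} (h : ∀ g ∈ G, g w ∈ E ↔ g w ∈ F) :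
    PstarOf G E w = PstarOf G F w := by
  unfold PstarOf
  congr 1
  exact Finset.sum_congr rfl fun g hg => Set.indicator_eq_indicator (h g hg) rfl

lemma PstarOf_apply_of_mem (hG_mul : ∀ g ∈ G, ∀ g' ∈ G, g.trans g' ∈ G)
    (hG_inv : ∀ g ∈ G, g.symm ∈ G) {g : Ω ≃ᵐ Ω} (hg : g ∈ G) (E : Set Ω) (w : Ω) :
    PstarOf G E (g w) = PstarOf G E w := by
  unfold PstarOf
  congr 1
  refine Finset.sum_nbij' (g.trans ·) (g.symm.trans ·) (fun h hh => hG_mul g hg h hh)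
    (fun h hh => hG_mul _ (hG_inv g hg) h hh) (fun h _ => ?_) (fun h _ => ?_) (fun h _ => rfl)
  all_goals ext; simp

variable {Q : Measure Ω}

lemma integral_PstarOf [IsFiniteMeasure Q] (hG : G.Nonempty) (hQ : ∀ g ∈ G, Q.map g = Q)
    {A : Set Ω} (hA : MeasurableSet A) : ∫ w, PstarOf G A w ∂Q = Q.real A := by
  have hterm : ∀ g ∈ G, ∫ w, (g ⁻¹' A).indicator 1 w ∂Q = Q.real A := fun g hg => by
    rw [integral_indicator_one (hA.preimage g.measurable), measureReal_def, measureReal_def,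
      ← MeasurableEquiv.map_apply, hQ g hg]
  have hcard : (G.card : ℝ) ≠ 0 := by exact_mod_cast hG.card_pos.ne'
  simp only [PstarOf_eq_sum_indicator_preimage]
  rw [integral_const_mul, integral_finsetSum _ fun g _ =>
      (integrable_const 1).indicator (hA.preimage g.measurable),
    Finset.sum_congr rfl hterm, Finset.sum_const, nsmul_eq_mul, inv_mul_cancel_left₀ hcard]

lemma measureReal_le_of_PstarOf_le [IsProbabilityMeasure Q] (hG : G.Nonempty)
    (hQ : ∀ g ∈ G, Q.map g = Q) {A : Set Ω} (hA : MeasurableSet A) {α : ℝ}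
    (h : ∀ w, PstarOf G A w ≤ α) : Q.real A ≤ α :=
  calc Q.real A = ∫ w, PstarOf G A w ∂Q := (integral_PstarOf G hG hQ hA).symm
    _ ≤ ∫ _, α ∂Q := integral_mono_of_nonneg (.of_forall (PstarOf_nonneg G A))
        (integrable_const α) (.of_forall h)
    _ = α := by simp

end PermutationProbability

section WestfallYoung

variable {Ω : Type*} [MeasurableSpace Ω] (G : Finset (Ω ≃ᵐ Ω)) (S : Finset ℝ) (f : Ω → ℝ)
  (α : ℝ)

lemma wyOf_apply_of_mem (hG_mul : ∀ g ∈ G, ∀ g' ∈ G, g.trans g' ∈ G)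
    (hG_inv : ∀ g ∈ G, g.symm ∈ G) {g : Ω ≃ᵐ Ω} (hg : g ∈ G) (w : Ω) :
    wyOf G S f α (g w) = wyOf G S f α w := by
  simp only [wyOf, PstarOf_apply_of_mem G hG_mul hG_inv hg]

lemma wyOf_eq_max' {w : Ω} (h : (S.filter fun s => PstarOf G {w' | f w' ≤ s} w ≤ α).Nonempty) :
    wyOf G S f α w = (S.filter fun s => PstarOf G {w' | f w' ≤ s} w ≤ α).max' h := by
  rw [wyOf, ← Finset.coe_max' h, WithBot.unbotD_coe]

lemma PstarOf_setOf_le_wyOf_apply_le (hfpos : ∀ w, 0 < f w) (hα : 0 ≤ α) (w : Ω) :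
    PstarOf G {w' | f w' ≤ wyOf G S f α w} w ≤ α := by
  rcases (S.filter fun s => PstarOf G {w' | f w' ≤ s} w ≤ α).eq_empty_or_nonempty with h | h
  · have hzero : wyOf G S f α w = 0 := by simp [wyOf, h]
    have hempty : {w' | f w' ≤ 0} = ∅ :=
      Set.eq_empty_of_forall_notMem fun w' => (hfpos w').not_ge
    rwa [hzero, hempty, PstarOf_empty]
  · rw [wyOf_eq_max' G S f α h]
    exact (Finset.mem_filter.mp (Finset.max'_mem _ h)).2

lemma le_wyOf_iff (hfpos : ∀ w, 0 < f w) (hα : 0 ≤ α) {w : Ω} (hfw : f w ∈ S) :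
    f w ≤ wyOf G S f α w ↔ PstarOf G {w' | f w' ≤ f w} w ≤ α := by
  refine ⟨fun h => ?_, fun h => ?_⟩
  · exact (PstarOf_mono G (fun w' hw' => le_trans hw' h) w).trans
      (PstarOf_setOf_le_wyOf_apply_le G S f α hfpos hα w)
  · have hmem : f w ∈ S.filter fun s => PstarOf G {w' | f w' ≤ s} w ≤ α :=
      Finset.mem_filter.mpr ⟨hfw, h⟩
    rw [wyOf_eq_max' G S f α ⟨_, hmem⟩]
    exact Finset.le_max' _ _ hmem

lemma measurableSet_setOf_le_wyOf (hf : Measurable f) (hfS : ∀ w, f w ∈ S)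
    (hfpos : ∀ w, 0 < f w) (hα : 0 ≤ α) : MeasurableSet {w | f w ≤ wyOf G S f α w} := by
  have hrepr : {w | f w ≤ wyOf G S f α w} =
      ⋃ s ∈ S, f ⁻¹' {s} ∩ {w | PstarOf G {w' | f w' ≤ s} w ≤ α} := by
    ext w
    simp only [Set.mem_ofPred_eq, Set.mem_iUnion, Set.mem_inter_iff, Set.mem_preimage,
      Set.mem_singleton_iff, exists_prop, le_wyOf_iff G S f α hfpos hα (hfS w)]
    exact ⟨fun h => ⟨f w, hfS w, rfl, h⟩, by rintro ⟨s, -, rfl, h⟩; exact h⟩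
  rw [hrepr]
  exact .biUnion S.countable_toSet fun s _ => (hf (measurableSet_singleton s)).inter <|
    measurableSet_le (measurable_PstarOf G (measurableSet_le hf measurable_const))
      measurable_const

lemma PstarOf_setOf_le_wyOf_le (hG_mul : ∀ g ∈ G, ∀ g' ∈ G, g.trans g' ∈ G)
    (hG_inv : ∀ g ∈ G, g.symm ∈ G) (hfpos : ∀ w, 0 < f w) (hα : 0 ≤ α) (w : Ω) :
    PstarOf G {w' | f w' ≤ wyOf G S f α w'} w ≤ α := by
  rw [PstarOf_congr G (F := {w' | f w' ≤ wyOf G S f α w}) fun g hg => by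
    simp only [Set.mem_ofPred_eq, wyOf_apply_of_mem G S f α hG_mul hG_inv hg]]
  exact PstarOf_setOf_le_wyOf_apply_le G S f α hfpos hα w

theorem measureReal_setOf_le_wyOf_le {Q : Measure Ω} [IsProbabilityMeasure Q]
    (hf : Measurable f) (hfS : ∀ w, f w ∈ S) (hfpos : ∀ w, 0 < f w) (hG : G.Nonempty)
    (hG_mul : ∀ g ∈ G, ∀ g' ∈ G, g.trans g' ∈ G) (hG_inv : ∀ g ∈ G, g.symm ∈ G)
    (hQ : ∀ g ∈ G, Q.map g = Q) (hα : 0 ≤ α) :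
    Q.real {w | f w ≤ wyOf G S f α w} ≤ α :=
  measureReal_le_of_PstarOf_le G hG hQ (measurableSet_setOf_le_wyOf G S f α hf hfS hfpos hα)
    (PstarOf_setOf_le_wyOf_le G S f α hG_mul hG_inv hfpos hα)

end WestfallYoung

/-- **Weak FWER control of the single-step Westfall–Young procedure.** If the `p`-values
take values in a finite `S ⊆ (0,1]` and the randomization hypothesis holds (`gW ∼ W`
under `Q` for every `g` in the finite group `𝒢`), then
`Q(min_{1≤j≤m} p_j(W) ≤ ĉ(α)(W)) ≤ α` for every `α ∈ (0,1)`. -/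
theorem westfall_young_weak_fwer_control
    {Ω : Type*} [MeasurableSpace Ω] (Q : Measure Ω) [IsProbabilityMeasure Q]
    {m : ℕ} (hm : 0 < m) (p : Fin m → Ω → ℝ) (hpm : ∀ j, Measurable (p j))
    (S : Finset ℝ) (hS01 : ∀ s ∈ S, 0 < s ∧ s ≤ 1) (hp : ∀ j w, p j w ∈ S)
    (G : Finset (Ω ≃ᵐ Ω))
    (hG_one : MeasurableEquiv.refl Ω ∈ G)
    (hG_mul : ∀ g ∈ G, ∀ g' ∈ G, g.trans g' ∈ G)
    (hG_inv : ∀ g ∈ G, g.symm ∈ G)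
    (hrand : ∀ g ∈ G, Measure.map (g : Ω ≃ᵐ Ω) Q = Q)
    (α : ℝ) (hα : α ∈ Set.Ioo (0 : ℝ) 1) :
    (Q {w | Finset.univ.inf' ⟨⟨0, hm⟩, Finset.mem_univ _⟩ (fun j => p j w)
        ≤ wyOf G S (fun w' => Finset.univ.inf' ⟨⟨0, hm⟩, Finset.mem_univ _⟩
            (fun j => p j w')) α w}).toReal ≤ α := by
  set f : Ω → ℝ := fun w => Finset.univ.inf' ⟨⟨0, hm⟩, Finset.mem_univ _⟩ fun j => p j w
  have hfS : ∀ w, f w ∈ S := fun w => by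
    obtain ⟨j, -, hj⟩ := Finset.exists_mem_eq_inf' ⟨⟨0, hm⟩, Finset.mem_univ _⟩ fun j => p j w
    rw [show f w = p j w from hj]
    exact hp j w
  have hf : Measurable f := by fun_prop
  exact measureReal_setOf_le_wyOf_le G S f α hf hfS (fun w => (hS01 _ (hfS w)).1) ⟨_, hG_one⟩
    hG_mul hG_inv hrand hα.1.le
end
end
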